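/- There exists a constant C > 0 such that for all real numbers u, v, s: |F(u + v + s) − F(u + v) − f(u + v) · s| ≤ C · ( (|u|^{4/3} + |v|^{4/3}) s² + |s|^{10/3} ). -/

import Mathlib

private lemma sq_rpow_eq (x p : ℝ) : (x ^ 2) ^ p = |x| ^ (2 * p) := by
  rw [← sq_abs, ← Real.rpow_natCast |x| 2, ← Real.rpow_mul (abs_nonneg x)]
  norm_num

/-- The nonlinearity `f(u) = |u|^{4/3} u`. -/
noncomputable def fnl (u : ℝ) : ℝ := |u| ^ ((4 : ℝ) / 3) * u

/-- The potential `F(u) = (3/10) |u|^{10/3}`, with `F' = f`. -/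
noncomputable def Fnl (u : ℝ) : ℝ := (3 / 10) * |u| ^ ((10 : ℝ) / 3)

private lemma hasDerivAt_Fnl (x : ℝ) : HasDerivAt Fnl (fnl x) x := by
  have h1 : HasDerivAt (fun y : ℝ => y ^ 2) (2 * x) x := by
    simpa using (hasDerivAt_pow 2 x)
  have h2 : HasDerivAt (fun y : ℝ => ((y ^ 2) ^ ((5:ℝ)/3)))
      (2 * x * ((5:ℝ)/3) * (x ^ 2) ^ ((5:ℝ)/3 - 1)) x :=
    h1.rpow_const (Or.inr (by norm_num))
  have h3 := h2.const_mul (3/10 : ℝ)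
  have e1 : (fun y : ℝ => (3/10 : ℝ) * ((y ^ 2) ^ ((5:ℝ)/3))) = Fnl := by
    funext y; rw [Fnl, sq_rpow_eq]; norm_num
  have e2 : (3/10 : ℝ) * (2 * x * ((5:ℝ)/3) * (x ^ 2) ^ ((5:ℝ)/3 - 1)) = fnl x := by
    rw [fnl, sq_rpow_eq]; norm_num; ring
  rw [e1, e2] at h3; exact h3

private lemma hasDerivAt_fnl (x : ℝ) :
    HasDerivAt fnl ((7/3 : ℝ) * |x| ^ ((4:ℝ)/3)) x := by
  rcases eq_or_ne x 0 with rfl | hx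
  · rw [hasDerivAt_iff_tendsto_slope]
    have hs : ∀ y : ℝ, slope fnl 0 y = |y| ^ ((4:ℝ)/3) * (y * y⁻¹) := by
      intro y
      simp [slope, fnl, Real.zero_rpow (by norm_num : ((4:ℝ)/3) ≠ 0)]
      ring
    have habs : Filter.Tendsto (fun y : ℝ => |y| ^ ((4:ℝ)/3)) (nhdsWithin 0 {0}ᶜ) (nhds 0) := by
      have hc : ContinuousAt (fun y : ℝ => |y| ^ ((4:ℝ)/3)) 0 :=
        ContinuousAt.rpow_const continuous_abs.continuousAt (Or.inr (by norm_num))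
      have := hc.continuousWithinAt (s := {(0:ℝ)}ᶜ)
      simpa [Real.zero_rpow (by norm_num : ((4:ℝ)/3) ≠ 0)] using this.tendsto
    have key : Filter.Tendsto (slope fnl 0) (nhdsWithin 0 {0}ᶜ) (nhds 0) := by
      apply habs.congr'
      filter_upwards [self_mem_nhdsWithin] with y hy
      rw [hs y, mul_inv_cancel₀ (by simpa using hy), mul_one]
    simpa [Real.zero_rpow (by norm_num : ((4:ℝ)/3) ≠ 0)] using key
  · have hx2 : (0:ℝ) < x ^ 2 := by positivity
    have h1 : HasDerivAt (fun y : ℝ => y ^ 2) (2 * x) x := by simpa using hasDerivAt_pow 2 x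
    have h2 : HasDerivAt (fun y : ℝ => (y ^ 2) ^ ((2:ℝ)/3))
        (2 * x * ((2:ℝ)/3) * (x ^ 2) ^ ((2:ℝ)/3 - 1)) x :=
      h1.rpow_const (Or.inl hx2.ne')
    have h3 := h2.mul (hasDerivAt_id x)
    have e1 : (fun y : ℝ => (y ^ 2) ^ ((2:ℝ)/3) * id y) = fnl := by
      funext y; rw [fnl, sq_rpow_eq]; norm_num
    have e2 : 2 * x * ((2:ℝ)/3) * (x ^ 2) ^ ((2:ℝ)/3 - 1) * id x + (x ^ 2) ^ ((2:ℝ)/3) * 1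
        = (7/3 : ℝ) * |x| ^ ((4:ℝ)/3) := by
      have h4 : (x ^ 2) ^ ((2:ℝ)/3 - 1) * x ^ 2 = (x ^ 2) ^ ((2:ℝ)/3) := by
        calc (x ^ 2) ^ ((2:ℝ)/3 - 1) * x ^ 2
            = (x ^ 2) ^ ((2:ℝ)/3 - 1) * (x ^ 2) ^ (1:ℝ) := by rw [Real.rpow_one]
          _ = (x ^ 2) ^ ((2:ℝ)/3) := by rw [← Real.rpow_add hx2]; norm_num
      have e3 : 2 * x * ((2:ℝ)/3) * (x ^ 2) ^ ((2:ℝ)/3 - 1) * id x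
          = (4/3 : ℝ) * ((x ^ 2) ^ ((2:ℝ)/3 - 1) * x ^ 2) := by simp [id]; ring
      rw [e3, h4, sq_rpow_eq]; norm_num; ring
    rw [show ((fun y : ℝ => (y ^ 2) ^ ((2:ℝ)/3)) * id) = fnl from e1, e2] at h3; exact h3

private lemma two_rpow_le_three : (2:ℝ) ^ ((4:ℝ)/3) ≤ 3 := by
  have h3 : ((2:ℝ) ^ ((4:ℝ)/3)) ^ (3:ℕ) ≤ (3:ℝ) ^ (3:ℕ) := by
    rw [← Real.rpow_natCast ((2:ℝ) ^ ((4:ℝ)/3)) 3, ← Real.rpow_mul (by norm_num)]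
    norm_num
  exact le_of_pow_le_pow_left₀ (by norm_num) (by norm_num) h3

private lemma add_rpow_le (x y : ℝ) (hx : 0 ≤ x) (hy : 0 ≤ y) :
    (x + y) ^ ((4:ℝ)/3) ≤ 3 * (x ^ ((4:ℝ)/3) + y ^ ((4:ℝ)/3)) := by
  have hmax : (0:ℝ) ≤ max x y := le_max_of_le_left hx
  have h1 : x + y ≤ 2 * max x y := by
    rcases max_cases x y with ⟨h, h'⟩ | ⟨h, h'⟩ <;> rw [h] <;> linarith
  have h2 : (x + y) ^ ((4:ℝ)/3) ≤ (2 * max x y) ^ ((4:ℝ)/3) :=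
    Real.rpow_le_rpow (by linarith) h1 (by norm_num)
  have h3 : (2 * max x y) ^ ((4:ℝ)/3) = 2 ^ ((4:ℝ)/3) * (max x y) ^ ((4:ℝ)/3) :=
    Real.mul_rpow (by norm_num) hmax
  have h4 : (max x y) ^ ((4:ℝ)/3) ≤ x ^ ((4:ℝ)/3) + y ^ ((4:ℝ)/3) := by
    rcases max_cases x y with ⟨h, _⟩ | ⟨h, _⟩ <;> rw [h]
    · nlinarith [Real.rpow_nonneg hy ((4:ℝ)/3)]
    · nlinarith [Real.rpow_nonneg hx ((4:ℝ)/3)]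
  have h5 : (0:ℝ) ≤ (max x y) ^ ((4:ℝ)/3) := Real.rpow_nonneg hmax _
  nlinarith [two_rpow_le_three]

private lemma fnl_lip (a b : ℝ) :
    |fnl a - fnl b| ≤ (7/3 : ℝ) * (|a| ^ ((4:ℝ)/3) + |b| ^ ((4:ℝ)/3)) * |a - b| := by
  have key := Convex.norm_image_sub_le_of_norm_hasDerivWithin_le
    (f := fnl) (f' := fun x => (7/3 : ℝ) * |x| ^ ((4:ℝ)/3)) (s := Set.uIcc b a)
    (C := (7/3 : ℝ) * (|a| ^ ((4:ℝ)/3) + |b| ^ ((4:ℝ)/3)))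
    (fun x _ => (hasDerivAt_fnl x).hasDerivWithinAt)
    (fun x hx => by
      have hxle : |x| ≤ max |a| |b| := by
        rcases Set.mem_uIcc.mp hx with ⟨h1, h2⟩ | ⟨h1, h2⟩
        · simpa [max_comm] using abs_le_max_abs_abs h1 h2
        · exact abs_le_max_abs_abs h1 h2
      have : |x| ^ ((4:ℝ)/3) ≤ |a| ^ ((4:ℝ)/3) + |b| ^ ((4:ℝ)/3) := by
        calc |x| ^ ((4:ℝ)/3) ≤ (max |a| |b|) ^ ((4:ℝ)/3) :=
              Real.rpow_le_rpow (abs_nonneg x) hxle (by norm_num)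
          _ ≤ _ := by
              rcases max_cases |a| |b| with ⟨h, _⟩ | ⟨h, _⟩ <;> rw [h]
              · nlinarith [Real.rpow_nonneg (abs_nonneg b) ((4:ℝ)/3)]
              · nlinarith [Real.rpow_nonneg (abs_nonneg a) ((4:ℝ)/3)]
      have h0 : (0:ℝ) ≤ (7/3 : ℝ) * |x| ^ ((4:ℝ)/3) := by positivity
      rw [Real.norm_eq_abs, abs_of_nonneg h0]
      linarith)
    (convex_uIcc b a) Set.left_mem_uIcc Set.right_mem_uIcc
  simpa [Real.norm_eq_abs] using key

theorem stmt_5 :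
    ∃ C > (0 : ℝ), ∀ u v s : ℝ,
      |Fnl (u + v + s) - Fnl (u + v) - fnl (u + v) * s| ≤
        C * ((|u| ^ ((4 : ℝ) / 3) + |v| ^ ((4 : ℝ) / 3)) * s ^ 2 + |s| ^ ((10 : ℝ) / 3)) := by
  refine ⟨28, by norm_num, fun u v s => ?_⟩
  set w := u + v with hw
  have hg : ∀ t : ℝ, HasDerivAt (fun t => Fnl (w + t) - fnl w * t) (fnl (w + t) - fnl w) t := by
    intro t
    have h1 : HasDerivAt (fun t : ℝ => Fnl (w + t)) (fnl (w + t)) t := by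
      have := (hasDerivAt_Fnl (w + t)).comp t ((hasDerivAt_id t).const_add w)
      rw [mul_one] at this; exact this
    have h2 : HasDerivAt (fun t : ℝ => fnl w * t) (fnl w) t := by
      simpa using (hasDerivAt_id t).const_mul (fnl w)
    exact h1.sub h2
  set A := |w| ^ ((4:ℝ)/3) with hA
  set B := |s| ^ ((4:ℝ)/3) with hB
  have hA0 : 0 ≤ A := Real.rpow_nonneg (abs_nonneg w) _
  have hB0 : 0 ≤ B := Real.rpow_nonneg (abs_nonneg s) _
  have hbound : ∀ t ∈ Set.uIcc (0:ℝ) s,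
      ‖fnl (w + t) - fnl w‖ ≤ (28/3 : ℝ) * (A + B) * |s| := by
    intro t ht
    have hts : |t| ≤ |s| := by
      rcases Set.mem_uIcc.mp ht with ⟨h1, h2⟩ | ⟨h1, h2⟩
      · simpa [max_comm] using abs_le_max_abs_abs h1 h2
      · simpa using abs_le_max_abs_abs h1 h2
    have hl := fnl_lip (w + t) w
    have hwt : |w + t| ^ ((4:ℝ)/3) ≤ 3 * (A + B) := by
      calc |w + t| ^ ((4:ℝ)/3) ≤ (|w| + |s|) ^ ((4:ℝ)/3) := by
            apply Real.rpow_le_rpow (abs_nonneg _) _ (by norm_num)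
            calc |w + t| ≤ |w| + |t| := abs_add_le w t
              _ ≤ |w| + |s| := by linarith
        _ ≤ 3 * (A + B) := add_rpow_le |w| |s| (abs_nonneg w) (abs_nonneg s)
    have hst : |w + t - w| = |t| := by congr 1; ring
    rw [hst] at hl
    rw [Real.norm_eq_abs]
    have habs : (0:ℝ) ≤ |t| := abs_nonneg t
    have hwt0 : (0:ℝ) ≤ |w + t| ^ ((4:ℝ)/3) := Real.rpow_nonneg (abs_nonneg _) _
    nlinarith [abs_nonneg s]
  have key := Convex.norm_image_sub_le_of_norm_hasDerivWithin_le
    (f := fun t => Fnl (w + t) - fnl w * t) (f' := fun t => fnl (w + t) - fnl w)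
    (s := Set.uIcc (0:ℝ) s) (C := (28/3 : ℝ) * (A + B) * |s|)
    (fun t _ => (hg t).hasDerivWithinAt) hbound (convex_uIcc 0 s)
    Set.left_mem_uIcc Set.right_mem_uIcc
  simp only [Real.norm_eq_abs, add_zero, mul_zero, sub_zero] at key
  have key2 : |Fnl (w + s) - Fnl w - fnl w * s| ≤ (28/3 : ℝ) * (A + B) * |s| * |s| := by
    have e : Fnl (w + s) - fnl w * s - Fnl w = Fnl (w + s) - Fnl w - fnl w * s := by ring
    rw [e] at key; exact key
  have hms : (28/3 : ℝ) * (A + B) * |s| * |s| = (28/3 : ℝ) * (A * s ^ 2 + |s| ^ ((10:ℝ)/3)) := by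
    have h1 : |s| * |s| = s ^ 2 := by rw [← sq_abs]; ring
    have h2 : B * s ^ 2 = |s| ^ ((10:ℝ)/3) := by
      rw [hB, ← sq_abs, ← Real.rpow_natCast |s| 2, ← Real.rpow_add' (abs_nonneg s) (by norm_num)]
      norm_num
    calc (28/3 : ℝ) * (A + B) * |s| * |s| = (28/3 : ℝ) * (A * (|s| * |s|) + B * (|s| * |s|)) := by ring
      _ = _ := by rw [h1, h2]
  rw [hms] at key2
  have hAuv : A ≤ 3 * (|u| ^ ((4:ℝ)/3) + |v| ^ ((4:ℝ)/3)) := by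
    calc A ≤ (|u| + |v|) ^ ((4:ℝ)/3) :=
          Real.rpow_le_rpow (abs_nonneg w) (abs_add_le u v) (by norm_num)
      _ ≤ _ := add_rpow_le |u| |v| (abs_nonneg u) (abs_nonneg v)
  have hu0 : 0 ≤ |u| ^ ((4:ℝ)/3) := Real.rpow_nonneg (abs_nonneg u) _
  have hv0 : 0 ≤ |v| ^ ((4:ℝ)/3) := Real.rpow_nonneg (abs_nonneg v) _
  have hs0 : 0 ≤ |s| ^ ((10:ℝ)/3) := Real.rpow_nonneg (abs_nonneg s) _
  have hsq : (0:ℝ) ≤ s ^ 2 := sq_nonneg s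
  calc |Fnl (w + s) - Fnl w - fnl w * s| ≤ (28/3 : ℝ) * (A * s ^ 2 + |s| ^ ((10:ℝ)/3)) := key2
    _ ≤ 28 * ((|u| ^ ((4:ℝ)/3) + |v| ^ ((4:ℝ)/3)) * s ^ 2 + |s| ^ ((10:ℝ)/3)) := by nlinarith
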